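/- arXiv:1702.02717 — 3 statements merged into one kernel-verified Lean document; each statement's English description precedes it below -/
import Mathlib

section
/- Let a group G act transitively on a nonempty set M, fix m₀ ∈ M, and let H be the stabilizer of m₀ in G. Suppose φ: M → M is a bijection and l ∈ G satisfy φ(k·m) = (l·k·l⁻¹)·φ(m) for all k ∈ G and m ∈ M. Then there exists r in the normalizer N_G(H) of H in G such that φ(g·m₀) = (l·g·r⁻¹)·m₀ for all g ∈ G. -/
/-!
Choose `s` with `s • m₀ = φ m₀`. Twisted equivariance gives
`φ (g • m₀) = (l * g * l⁻¹ * s) • m₀`, so `r = s⁻¹ * l`. Since `φ` is injective, the stabilizer of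
`φ m₀` is `l H l⁻¹`; it is also `s H s⁻¹`, and these two conjugates of `H` agree exactly when
`s⁻¹ * l` normalizes `H`.
-/

open MulAction

theorem MulAction.stabilizer_apply_eq_map_of_injective {G G' M N : Type*} [Group G] [Group G']
    [MulAction G M] [MulAction G' N] {f : M → N} (hf : Function.Injective f) (σ : G ≃* G')
    (hσ : ∀ (k : G) (m : M), f (k • m) = σ k • f m) (m : M) :
    stabilizer G' (f m) = (stabilizer G m).map σ.toMonoidHom := by
  ext g'
  obtain ⟨k, rfl⟩ := σ.surjective g'
  rw [Subgroup.mem_map_equiv, MulEquiv.symm_apply_apply, mem_stabilizer_iff, mem_stabilizer_iff,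
    ← hσ, hf.eq_iff]

theorem Subgroup.inv_mul_mem_normalizer_of_map_conj_eq {G : Type*} [Group G] {H : Subgroup G}
    {s l : G} (h : H.map (MulAut.conj l).toMonoidHom = H.map (MulAut.conj s).toMonoidHom) :
    s⁻¹ * l ∈ normalizer (H : Set G) := by
  have hcomp : ∀ a b : G, H.map (MulAut.conj (a * b)).toMonoidHom =
      (H.map (MulAut.conj b).toMonoidHom).map (MulAut.conj a).toMonoidHom := fun a b ↦ by
    rw [map_map, map_mul]; rfl
  rw [mem_normalizer_iff_map_conj_eq, ← MulEquiv.toMonoidHom_eq_coe, hcomp, h, ← hcomp,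
    inv_mul_cancel, map_one]
  exact H.map_id

theorem normalizer_of_symmetry_general {G M : Type*} [Group G] [MulAction G M]
    [MulAction.IsPretransitive G M] (m₀ : M)
    (φ : Equiv.Perm M) (l : G)
    (hφ : ∀ (k : G) (m : M), φ (k • m) = (l * k * l⁻¹) • φ m) :
    ∃ r ∈ Subgroup.normalizer (MulAction.stabilizer G m₀ : Set G),
      ∀ g : G, φ (g • m₀) = (l * g * r⁻¹) • m₀ := by
  obtain ⟨s, hs⟩ := exists_smul_eq G m₀ (φ m₀)
  have hconj : (stabilizer G m₀).map (MulAut.conj l).toMonoidHom =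
      (stabilizer G m₀).map (MulAut.conj s).toMonoidHom := by
    rw [← stabilizer_apply_eq_map_of_injective φ.injective (MulAut.conj l) hφ,
      ← stabilizer_smul_eq_stabilizer_map_conj, hs]
  refine ⟨s⁻¹ * l, Subgroup.inv_mul_mem_normalizer_of_map_conj_eq hconj, fun g ↦ ?_⟩
  rw [hφ, ← hs, smul_smul]
  group

/-- Proposition 2.2, converse direction: on a transitive `G`-set `M` with basepoint `m₀` and
stabilizer `H`, every symmetry `φ` of `M` (with associated element `l ∈ G`) arises from a pair
`(l, r)` with `r` in the normalizer of `H`: `φ (g • m₀) = (l * g * r⁻¹) • m₀` for all `g`. -/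
theorem normalizer_of_symmetry {G M : Type*} [Group G] [MulAction G M] [Nonempty M]
    [MulAction.IsPretransitive G M] (m₀ : M)
    (φ : Equiv.Perm M) (l : G)
    (hφ : ∀ (k : G) (m : M), φ (k • m) = (l * k * l⁻¹) • φ m) :
    ∃ r ∈ Subgroup.normalizer (MulAction.stabilizer G m₀ : Set G),
      ∀ g : G, φ (g • m₀) = (l * g * r⁻¹) • m₀ :=
  normalizer_of_symmetry_general m₀ φ l hφ
end

section
/- Let U ⊆ ℝⁿ be open and let ω: U → L(ℝⁿ, Matrix m m ℝ) be a Maurer–Cartan form. Let γ₀, γ₁: [0,1] → U be smooth paths with γ₀(0) = γ₁(0) and γ₀(1) = γ₁(1), and suppose there is a smooth homotopy rel endpoints between them, i.e., a smooth map Hmt: [0,1] × [0,1] → U with Hmt(0,t) = γ₀(t), Hmt(1,t) = γ₁(t), Hmt(ε,0) = γ₀(0) and Hmt(ε,1) = γ₀(1) for all ε, t ∈ [0,1]. Then the developments of ω along γ₀ and γ₁ have the same endpoint: g_{γ₀}(1) = g_{γ₁}(1). -/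
set_option maxHeartbeats 1000000

open Set Metric Real
open scoped NNReal

attribute [local instance] Matrix.normedAddCommGroup Matrix.normedSpace

noncomputable section

instance instNormedAddCommGroupCLMFinMatrix {n m : ℕ} :
    NormedAddCommGroup ((Fin n → ℝ) →L[ℝ] Matrix (Fin m) (Fin m) ℝ) :=
  ContinuousLinearMap.toNormedAddCommGroup

instance instNormedSpaceCLMFinMatrix {n m : ℕ} :
    NormedSpace ℝ ((Fin n → ℝ) →L[ℝ] Matrix (Fin m) (Fin m) ℝ) :=
  ContinuousLinearMap.toNormedSpace

instance DevAux.instNormedAddCommGroupCLMMatMat {m : ℕ} :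
    NormedAddCommGroup (Matrix (Fin m) (Fin m) ℝ →L[ℝ] Matrix (Fin m) (Fin m) ℝ) :=
  ContinuousLinearMap.toNormedAddCommGroup

instance DevAux.instNormedSpaceCLMMatMat {m : ℕ} :
    NormedSpace ℝ (Matrix (Fin m) (Fin m) ℝ →L[ℝ] Matrix (Fin m) (Fin m) ℝ) :=
  ContinuousLinearMap.toNormedSpace

instance DevAux.instNormedAddCommGroupCLMProdMat {m : ℕ} :
    NormedAddCommGroup (ℝ × ℝ →L[ℝ] Matrix (Fin m) (Fin m) ℝ) :=
  ContinuousLinearMap.toNormedAddCommGroup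

instance DevAux.instNormedSpaceCLMProdMat {m : ℕ} :
    NormedSpace ℝ (ℝ × ℝ →L[ℝ] Matrix (Fin m) (Fin m) ℝ) :=
  ContinuousLinearMap.toNormedSpace

instance DevAux.instNormedAddCommGroupCLMProdProdMat {m : ℕ} :
    NormedAddCommGroup (ℝ × ℝ →L[ℝ] ℝ × ℝ →L[ℝ] Matrix (Fin m) (Fin m) ℝ) :=
  ContinuousLinearMap.toNormedAddCommGroup

instance DevAux.instNormedSpaceCLMProdProdMat {m : ℕ} :
    NormedSpace ℝ (ℝ × ℝ →L[ℝ] ℝ × ℝ →L[ℝ] Matrix (Fin m) (Fin m) ℝ) :=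
  @ContinuousLinearMap.toNormedSpace ℝ ℝ _ _ _ _ _ _ _ _ (RingHom.id ℝ) _ ℝ _ _ (smulCommClass_self ℝ _)

end

section Helpers

variable {E : Type*} [NormedAddCommGroup E] [NormedSpace ℝ E]

/-- Upgrade a derivative within `Icc a b` to a derivative within `Ici t` for `t < b`. -/
lemma DevAux.hdw_Ici {f : ℝ → E} {d : E} {a b t : ℝ} (h : HasDerivWithinAt f d (Icc a b) t)
    (hat : a ≤ t) (htb : t < b) : HasDerivWithinAt f d (Ici t) t := by
  apply h.mono_of_mem_nhdsWithin
  have hsub : Ici t ∩ Iio b ⊆ Icc a b := fun s hs => ⟨hat.trans hs.1, le_of_lt hs.2⟩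
  exact Filter.mem_of_superset (inter_mem_nhdsWithin _ (Iio_mem_nhds htb)) hsub

/-- Glue two ODE solutions at a junction point. -/
lemma DevAux.glue_ode (v : ℝ → E → E) {a b c : ℝ} (hab : a ≤ b) (hbc : b ≤ c)
    {f g : ℝ → E}
    (hf : ∀ t ∈ Icc a b, HasDerivWithinAt f (v t (f t)) (Icc a b) t)
    (hg : ∀ t ∈ Icc b c, HasDerivWithinAt g (v t (g t)) (Icc b c) t)
    (hfg : f b = g b) :
    ∃ F : ℝ → E, (∀ t ∈ Icc a b, F t = f t) ∧
      ∀ t ∈ Icc a c, HasDerivWithinAt F (v t (F t)) (Icc a c) t := by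
  classical
  set F : ℝ → E := fun t => if t ≤ b then f t else g t with hF
  have hFf : ∀ t, t ≤ b → F t = f t := fun t ht => if_pos ht
  have hFg : ∀ t, b ≤ t → F t = g t := by
    intro t ht
    rcases eq_or_lt_of_le ht with h | h
    · simp [hF, ← h, hfg]
    · simp [hF, not_le.2 h]
  refine ⟨F, fun t ht => hFf t ht.2, ?_⟩
  intro t ht
  rcases lt_trichotomy t b with hlt | heq | hgt
  · -- t < b
    have h1 : HasDerivWithinAt f (v t (f t)) (Icc a c) t := by
      apply (hf t ⟨ht.1, hlt.le⟩).mono_of_mem_nhdsWithin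
      have hsub : Icc a c ∩ Iio b ⊆ Icc a b := fun s hs => ⟨hs.1.1, hs.2.le⟩
      exact Filter.mem_of_superset (inter_mem_nhdsWithin _ (Iio_mem_nhds hlt)) hsub
    have h2 : F =ᶠ[nhdsWithin t (Icc a c)] f := by
      filter_upwards [nhdsWithin_le_nhds (Iio_mem_nhds hlt)] with s hs
      exact hFf s (le_of_lt hs)
    have := h1.congr_of_eventuallyEq h2 (hFf t hlt.le)
    rwa [hFf t hlt.le]
  · -- t = b
    subst heq
    have h1 : HasDerivWithinAt F (v t (f t)) (Icc a t) t := by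
      refine (hf t ⟨ht.1, le_rfl⟩).congr ?_ (hFf t le_rfl)
      intro y hy; exact hFf y hy.2
    have h2 : HasDerivWithinAt F (v t (f t)) (Icc t c) t := by
      rw [hfg]
      refine (hg t ⟨le_rfl, ht.2⟩).congr ?_ (by rw [hFg t le_rfl])
      intro y hy; exact hFg y hy.1
    have h3 := h1.union h2
    rw [Set.Icc_union_Icc_eq_Icc ht.1 ht.2] at h3
    rwa [hFf t le_rfl]
  · -- b < t
    have h1 : HasDerivWithinAt g (v t (g t)) (Icc a c) t := by
      apply (hg t ⟨hgt.le, ht.2⟩).mono_of_mem_nhdsWithin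
      have hsub : Icc a c ∩ Ioi b ⊆ Icc b c := fun s hs => ⟨hs.2.le, hs.1.2⟩
      exact Filter.mem_of_superset (inter_mem_nhdsWithin _ (Ioi_mem_nhds hgt)) hsub
    have h2 : F =ᶠ[nhdsWithin t (Icc a c)] g := by
      filter_upwards [nhdsWithin_le_nhds (Ioi_mem_nhds hgt)] with s hs
      exact hFg s (le_of_lt hs)
    have := h1.congr_of_eventuallyEq h2 (hFg t hgt.le)
    rwa [hFg t hgt.le]

/-- A bound for the Grönwall bound on `[0,1]`. -/
lemma DevAux.gronwallBound_le {δ K ε x : ℝ} (hδ : 0 ≤ δ) (hK : 0 < K) (hε : 0 ≤ ε)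
    (hx : 0 ≤ x) (hx1 : x ≤ 1) : gronwallBound δ K ε x ≤ (δ + ε) * Real.exp K := by
  rw [gronwallBound_of_K_ne_0 hK.ne']
  have h1 : Real.exp (K * x) ≤ Real.exp K := by
    apply Real.exp_le_exp.2
    nlinarith
  have h2 : Real.exp K - 1 ≤ K * Real.exp K := by
    have := Real.add_one_le_exp (-K)
    have hpos := Real.exp_pos K
    have hmul : Real.exp (-K) * Real.exp K = 1 := by
      rw [← Real.exp_add]; simp
    nlinarith
  have h3 : ε / K * (Real.exp (K * x) - 1) ≤ ε * Real.exp K := by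
    have hKx : Real.exp (K * x) - 1 ≤ K * Real.exp K := by
      have : Real.exp (K * x) - 1 ≤ Real.exp K - 1 := by linarith
      linarith
    calc ε / K * (Real.exp (K * x) - 1) ≤ ε / K * (K * Real.exp K) := by
          apply mul_le_mul_of_nonneg_left hKx (by positivity)
      _ = ε * Real.exp K := by field_simp
  have h4 : δ * Real.exp (K * x) ≤ δ * Real.exp K :=
    mul_le_mul_of_nonneg_left h1 hδ
  nlinarith [Real.exp_pos K]

end Helpers

section Helpers
variable {E : Type*} [NormedAddCommGroup E] [NormedSpace ℝ E]

/-- A priori bound for solutions of an ODE with a Lipschitz field on `[0,1]`. -/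
lemma DevAux.apriori_bound (v : ℝ → E → E) (κ : ℝ≥0) (hκpos : 0 < (κ:ℝ))
    (hlip : ∀ t ∈ Icc (0:ℝ) 1, LipschitzWith κ (v t))
    {M₀ : ℝ} (hM₀ : 0 ≤ M₀) (hM : ∀ t ∈ Icc (0:ℝ) 1, ‖v t 0‖ ≤ M₀)
    {x₀ : E} {b : ℝ} (hb0 : 0 ≤ b) (hb1 : b ≤ 1) {f : ℝ → E} (hf0 : f 0 = x₀)
    (hf : ∀ t ∈ Icc (0:ℝ) b, HasDerivWithinAt f (v t (f t)) (Icc (0:ℝ) b) t) :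
    ∀ t ∈ Icc (0:ℝ) b, ‖f t‖ ≤ (‖x₀‖ + M₀) * Real.exp κ := by
  have hcont : ContinuousOn f (Icc 0 b) := fun t ht => (hf t ht).continuousWithinAt
  have hbd := norm_le_gronwallBound_of_norm_deriv_right_le (f := f)
    (f' := fun t => v t (f t)) (δ := ‖x₀‖) (K := κ) (ε := M₀) (a := 0) (b := b)
    hcont
    (fun t ht => DevAux.hdw_Ici (hf t ⟨ht.1, ht.2.le⟩) ht.1 ht.2)
    (by rw [hf0])
    (by
      intro t ht
      have htm : t ∈ Icc (0:ℝ) 1 := ⟨ht.1, ht.2.le.trans hb1⟩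
      calc ‖v t (f t)‖ ≤ ‖v t (f t) - v t 0‖ + ‖v t 0‖ := by
            simpa using norm_add_le (v t (f t) - v t 0) (v t 0)
        _ ≤ (κ:ℝ) * ‖f t‖ + M₀ := by
            gcongr
            · have := (hlip t htm).dist_le_mul (f t) 0
              simpa [dist_eq_norm] using this
            · exact hM t htm
        _ = (κ:ℝ) * ‖f t‖ + M₀ := rfl)
  intro t ht
  calc ‖f t‖ ≤ gronwallBound ‖x₀‖ κ M₀ (t - 0) := hbd t ht
    _ ≤ (‖x₀‖ + M₀) * Real.exp κ := by
        apply DevAux.gronwallBound_le (norm_nonneg _) hκpos hM₀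
        · simpa using ht.1
        · simpa using ht.2.trans hb1

/-- Global existence on `[0,1]` for an ODE with a uniformly Lipschitz field. -/
lemma DevAux.exists_solution_Icc [CompleteSpace E] (v : ℝ → E → E) (κ : ℝ≥0)
    (hκpos : 0 < (κ:ℝ))
    (hlip : ∀ t ∈ Icc (0:ℝ) 1, LipschitzWith κ (v t))
    (hcont : ∀ x, ContinuousOn (fun t => v t x) (Icc (0:ℝ) 1))
    (x₀ : E) :
    ∃ f : ℝ → E, f 0 = x₀ ∧
      ∀ t ∈ Icc (0:ℝ) 1, HasDerivWithinAt f (v t (f t)) (Icc (0:ℝ) 1) t := by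
  -- a bound for ‖v t 0‖ on [0,1]
  obtain ⟨M₀', hM₀'⟩ := isCompact_Icc.exists_bound_of_continuousOn (hcont 0)
  set M₀ : ℝ := max M₀' 0 with hM₀def
  have hM₀ : 0 ≤ M₀ := le_max_right _ _
  have hM : ∀ t ∈ Icc (0:ℝ) 1, ‖v t 0‖ ≤ M₀ := fun t ht => (hM₀' t ht).trans (le_max_left _ _)
  set G : ℝ := (‖x₀‖ + M₀) * Real.exp κ with hGdef
  have hG : 0 ≤ G := by positivity
  set C : ℝ := M₀ + (κ:ℝ) * (G + 1) with hCdef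
  have hC : 0 < C := add_pos_of_nonneg_of_pos hM₀ (mul_pos hκpos (by linarith))
  -- key: bound for the vector field on the ball of radius G+1
  have hvbound : ∀ t ∈ Icc (0:ℝ) 1, ∀ x : E, ‖x‖ ≤ G + 1 → ‖v t x‖ ≤ C := by
    intro t ht x hx
    calc ‖v t x‖ ≤ ‖v t x - v t 0‖ + ‖v t 0‖ := by
          simpa using norm_add_le (v t x - v t 0) (v t 0)
      _ ≤ (κ:ℝ) * ‖x‖ + M₀ := by
          gcongr
          · have := (hlip t ht).dist_le_mul x 0
            simpa [dist_eq_norm] using this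
          · exact hM t ht
      _ ≤ (κ:ℝ) * (G + 1) + M₀ := by gcongr
      _ = C := by rw [hCdef]; ring
  -- the induction
  have main : ∀ k : ℕ, ∃ f : ℝ → E, f 0 = x₀ ∧
      ∀ t ∈ Icc (0:ℝ) (min ((k:ℝ)/C) 1),
        HasDerivWithinAt f (v t (f t)) (Icc (0:ℝ) (min ((k:ℝ)/C) 1)) t := by
    intro k
    induction k with
    | zero =>
      refine ⟨fun _ => x₀, rfl, ?_⟩
      intro t ht
      simp only [Nat.cast_zero, zero_div, min_eq_left zero_le_one] at ht ⊢
      rw [Icc_self] at ht ⊢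
      simp only [mem_singleton_iff] at ht
      subst ht
      exact HasFDerivWithinAt.of_not_accPt (by rw [accPt_iff_clusterPt, Filter.inf_principal]; simp [ClusterPt])
    | succ k ih =>
      obtain ⟨f, hf0, hf⟩ := ih
      have hcast : ((k+1:ℕ):ℝ) = (k:ℝ)+1 := by push_cast; ring
      simp only [hcast]
      by_cases hk1 : 1 ≤ (k:ℝ)/C
      · -- already done: the interval is all of [0,1] and stays the same
        have h1 : min ((k:ℝ)/C) 1 = 1 := min_eq_right hk1
        have h2 : min (((k:ℝ)+1)/C) 1 = 1 := by
          apply min_eq_right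
          apply hk1.trans
          gcongr
          linarith
        refine ⟨f, hf0, ?_⟩
        rw [h2, ← h1]
        exact hf
      · push_neg at hk1
        set b : ℝ := min ((k:ℝ)/C) 1 with hbdef
        have hb : b = (k:ℝ)/C := min_eq_left hk1.le
        have hb0 : 0 ≤ b := le_min (by positivity) zero_le_one
        have hb1 : b ≤ 1 := min_le_right _ _
        set b' : ℝ := min (((k:ℝ)+1)/C) 1 with hb'def
        have hbb' : b ≤ b' := by
          apply le_min _ hb1
          rw [hb]; gcongr
          linarith
        have hb'1 : b' ≤ 1 := min_le_right _ _
        have hstep : b' - b ≤ 1/C := by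
          have : b' ≤ ((k:ℝ)+1)/C := min_le_left _ _
          rw [hb]
          have : b' - (k:ℝ)/C ≤ ((k:ℝ)+1)/C - (k:ℝ)/C := by linarith
          calc b' - (k:ℝ)/C ≤ ((k:ℝ)+1)/C - (k:ℝ)/C := this
            _ = 1/C := by ring
        -- bound on f b
        have hfb : ‖f b‖ ≤ G :=
          DevAux.apriori_bound v κ hκpos hlip hM₀ hM hb0 hb1 hf0 hf b
            ⟨hb0, le_rfl⟩
        -- Picard-Lindelöf on [b, b']
        have hpl : IsPicardLindelof v (tmin := b) (tmax := b') ⟨b, le_rfl, hbb'⟩ (f b) 1 0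
            ⟨C, hC.le⟩ κ :=
          { lipschitzOnWith := fun t ht =>
              (hlip t ⟨hb0.trans ht.1, ht.2.trans hb'1⟩).lipschitzOnWith
            continuousOn := fun x _ => (hcont x).mono (Icc_subset_Icc hb0 hb'1)
            norm_le := by
              intro t ht x hx
              apply hvbound t ⟨hb0.trans ht.1, ht.2.trans hb'1⟩
              have : ‖x - f b‖ ≤ 1 := by simpa [dist_eq_norm] using hx
              calc ‖x‖ ≤ ‖f b‖ + ‖x - f b‖ := by
                    simpa using norm_add_le (f b) (x - f b)
                _ ≤ G + 1 := add_le_add hfb this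
            mul_max_le := by
              rw [NNReal.coe_one, NNReal.coe_zero, sub_zero]
              show C * max (b' - b) (b - b) ≤ 1
              rw [sub_self, max_eq_left (by linarith : (0:ℝ) ≤ b' - b)]
              calc C * (b' - b) ≤ C * (1/C) := by gcongr
                _ = 1 := by field_simp }
        obtain ⟨g, hg0, hg⟩ := hpl.exists_eq_forall_mem_Icc_hasDerivWithinAt₀
        obtain ⟨F, hFeq, hFde⟩ := DevAux.glue_ode v hb0 hbb' hf hg hg0.symm
        refine ⟨F, ?_, ?_⟩
        · rw [hFeq 0 ⟨le_rfl, hb0⟩, hf0]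
        · exact hFde
  obtain ⟨f, hf0, hf⟩ := main (Nat.ceil C)
  have : min ((Nat.ceil C : ℝ)/C) 1 = 1 := by
    apply min_eq_right
    rw [le_div_iff₀ hC]
    simpa using Nat.le_ceil C
  rw [this] at hf
  exact ⟨f, hf0, hf⟩

end Helpers

namespace DevAux

variable {m : ℕ}

lemma mat_norm_mul (a b : Matrix (Fin m) (Fin m) ℝ) :
    ‖a * b‖ ≤ (m : ℝ) * ‖a‖ * ‖b‖ := by
  have h0 : (0:ℝ) ≤ (m : ℝ) * ‖a‖ * ‖b‖ := by positivity
  rw [Matrix.norm_le_iff h0]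
  intro i j
  rw [Matrix.mul_apply]
  calc ‖∑ k, a i k * b k j‖ ≤ ∑ k, ‖a i k * b k j‖ := norm_sum_le _ _
    _ ≤ ∑ _k : Fin m, ‖a‖ * ‖b‖ := by
        apply Finset.sum_le_sum
        intro k _
        rw [norm_mul]
        exact mul_le_mul (Matrix.norm_entry_le_entrywise_sup_norm a)
          (Matrix.norm_entry_le_entrywise_sup_norm b) (norm_nonneg _) (norm_nonneg _)
    _ = (m : ℝ) * ‖a‖ * ‖b‖ := by
        rw [Finset.sum_const, Finset.card_univ, Fintype.card_fin]
        push_cast; ring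

/-- Matrix multiplication as a continuous bilinear map (w.r.t. the entrywise sup norm). -/
noncomputable def Mmul (m : ℕ) :
    Matrix (Fin m) (Fin m) ℝ →L[ℝ] Matrix (Fin m) (Fin m) ℝ →L[ℝ] Matrix (Fin m) (Fin m) ℝ :=
  LinearMap.mkContinuous₂ (LinearMap.mul ℝ (Matrix (Fin m) (Fin m) ℝ)) (m : ℝ)
    (fun a b => mat_norm_mul a b)

@[simp] lemma Mmul_apply (a b : Matrix (Fin m) (Fin m) ℝ) : Mmul m a b = a * b := rfl

lemma HasDerivWithinAt.matmul {f g : ℝ → Matrix (Fin m) (Fin m) ℝ}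
    {f' g' : Matrix (Fin m) (Fin m) ℝ} {s : Set ℝ} {x : ℝ}
    (hf : HasDerivWithinAt f f' s x) (hg : HasDerivWithinAt g g' s x) :
    HasDerivWithinAt (fun t => f t * g t) (f' * g x + f x * g') s x := by
  have h1 : HasDerivWithinAt (fun t => Mmul m (f t)) (Mmul m f') s x :=
    (Mmul m).hasFDerivAt.comp_hasDerivWithinAt x hf
  have := h1.clm_apply hg
  exact this

end DevAux

namespace DevAux

/-- Abstract form of homotopy invariance of development:
if `A, B : ℝ×ℝ → M_m(ℝ)` form a flat family (zero curvature) on a neighbourhood of the unit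
square, with `B` vanishing on the top and bottom edges, then the time-1 solutions of
`g' = A(ε, t) g` at `ε = 0` and `ε = 1` agree. -/
theorem abstract {m : ℕ} (A B : ℝ × ℝ → Matrix (Fin m) (Fin m) ℝ)
    (V : Set (ℝ × ℝ)) (hV : IsOpen V)
    (hQV : Icc (0:ℝ) 1 ×ˢ Icc (0:ℝ) 1 ⊆ V)
    (hA : ContDiffOn ℝ 2 A V) (hB : ContDiffOn ℝ 1 B V)
    (key : ∀ p ∈ Icc (0:ℝ) 1 ×ˢ Icc (0:ℝ) 1,
      fderiv ℝ A p (1,0) - fderiv ℝ B p (0,1) = B p * A p - A p * B p)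
    (hB0 : ∀ ε ∈ Icc (0:ℝ) 1, B (ε,0) = 0) (hB1 : ∀ ε ∈ Icc (0:ℝ) 1, B (ε,1) = 0)
    {g₀ g₁ : ℝ → Matrix (Fin m) (Fin m) ℝ} (hg₀0 : g₀ 0 = 1) (hg₁0 : g₁ 0 = 1)
    (hg₀ : ∀ t ∈ Icc (0:ℝ) 1, HasDerivWithinAt g₀ (A (0,t) * g₀ t) (Icc (0:ℝ) 1) t)
    (hg₁ : ∀ t ∈ Icc (0:ℝ) 1, HasDerivWithinAt g₁ (A (1,t) * g₁ t) (Icc (0:ℝ) 1) t) :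
    g₀ 1 = g₁ 1 := by
  set Q : Set (ℝ × ℝ) := Icc (0:ℝ) 1 ×ˢ Icc (0:ℝ) 1 with hQdef
  have hQ : IsCompact Q := isCompact_Icc.prod isCompact_Icc
  have hQmem : ∀ {ε t : ℝ}, ε ∈ Icc (0:ℝ) 1 → t ∈ Icc (0:ℝ) 1 → ((ε,t) : ℝ×ℝ) ∈ Q :=
    fun hε ht => ⟨hε, ht⟩
  -- differentiability package
  have hAdiff : ∀ p ∈ V, DifferentiableAt ℝ A p := fun p hp =>
    ((hA.differentiableOn (by norm_num)).differentiableAt (hV.mem_nhds hp))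
  have hBdiff : ∀ p ∈ V, DifferentiableAt ℝ B p := fun p hp =>
    ((hB.differentiableOn one_ne_zero).differentiableAt (hV.mem_nhds hp))
  have hA1 : ContDiffOn ℝ 1 (fderiv ℝ A) V := hA.fderiv_of_isOpen hV (by norm_num)
  have hfAdiff : ∀ p ∈ V, DifferentiableAt ℝ (fderiv ℝ A) p := fun p hp =>
    ((hA1.differentiableOn one_ne_zero).differentiableAt (hV.mem_nhds hp))
  have hcffA : ContinuousOn (fderiv ℝ (fderiv ℝ A)) V := by
    have h : ContDiffOn ℝ 0 (fderiv ℝ (fderiv ℝ A)) V :=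
      hA1.fderiv_of_isOpen hV (by norm_num)
    exact h.continuousOn
  -- bounds
  obtain ⟨LA₀, hLA₀⟩ := hQ.exists_bound_of_continuousOn (hA.continuousOn.mono hQV)
  obtain ⟨LB₀, hLB₀⟩ := hQ.exists_bound_of_continuousOn (hB.continuousOn.mono hQV)
  obtain ⟨L1₀, hL1₀⟩ := hQ.exists_bound_of_continuousOn (hA1.continuousOn.mono hQV)
  obtain ⟨L2₀, hL2₀⟩ := hQ.exists_bound_of_continuousOn (hcffA.mono hQV)
  set LA := max LA₀ 0 with hLAdef
  set LB := max LB₀ 0 with hLBdef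
  set L1 := max L1₀ 0 with hL1def
  set L2 := max L2₀ 0 with hL2def
  have hLA : ∀ p ∈ Q, ‖A p‖ ≤ LA := fun p hp => (hLA₀ p hp).trans (le_max_left _ _)
  have hLB : ∀ p ∈ Q, ‖B p‖ ≤ LB := fun p hp => (hLB₀ p hp).trans (le_max_left _ _)
  have hL1 : ∀ p ∈ Q, ‖fderiv ℝ A p‖ ≤ L1 := fun p hp => (hL1₀ p hp).trans (le_max_left _ _)
  have hL2 : ∀ p ∈ Q, ‖fderiv ℝ (fderiv ℝ A) p‖ ≤ L2 :=
    fun p hp => (hL2₀ p hp).trans (le_max_left _ _)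
  have hLA0 : 0 ≤ LA := le_max_right _ _
  have hLB0 : 0 ≤ LB := le_max_right _ _
  have hL10 : 0 ≤ L1 := le_max_right _ _
  have hL20 : 0 ≤ L2 := le_max_right _ _
  -- Lipschitz and growth constants
  set KK : ℝ := (m:ℝ) * LA + 1 with hKKdef
  have hKK0 : 0 < KK := by positivity
  set KKn : ℝ≥0 := ⟨KK, hKK0.le⟩ with hKKndef
  have hKKn : (KKn : ℝ) = KK := rfl
  set GG : ℝ := Real.exp KK with hGGdef
  have hGG0 : 0 < GG := Real.exp_pos _
  -- norms of the direction vectors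
  have hnorm10 : ‖((1:ℝ),(0:ℝ))‖ = 1 := by simp [Prod.norm_def]
  have hnorm01 : ‖((0:ℝ),(1:ℝ))‖ = 1 := by simp [Prod.norm_def]
  -- directional derivatives
  have hAe : ∀ p : ℝ × ℝ, p ∈ V →
      HasDerivAt (fun s => A (s, p.2)) (fderiv ℝ A p (1,0)) p.1 := by
    intro p hp
    have h1 : HasDerivAt (fun s => ((s, p.2) : ℝ×ℝ)) ((1:ℝ),(0:ℝ)) p.1 :=
      HasDerivAt.prodMk (hasDerivAt_id p.1) (hasDerivAt_const p.1 p.2)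
    have := (hAdiff p hp).hasFDerivAt.comp_hasDerivAt p.1 h1
    exact this
  have hBt : ∀ p : ℝ × ℝ, p ∈ V →
      HasDerivAt (fun s => B (p.1, s)) (fderiv ℝ B p (0,1)) p.2 := by
    intro p hp
    have h1 : HasDerivAt (fun s => ((p.1, s) : ℝ×ℝ)) ((0:ℝ),(1:ℝ)) p.2 :=
      HasDerivAt.prodMk (hasDerivAt_const p.2 p.1) (hasDerivAt_id p.2)
    have := (hBdiff p hp).hasFDerivAt.comp_hasDerivAt p.2 h1
    exact this
  have hfAe : ∀ p : ℝ × ℝ, p ∈ V →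
      HasDerivAt (fun s => fderiv ℝ A (s, p.2) (1,0))
        (fderiv ℝ (fderiv ℝ A) p (1,0) (1,0)) p.1 := by
    intro p hp
    have h1 : HasDerivAt (fun s => ((s, p.2) : ℝ×ℝ)) ((1:ℝ),(0:ℝ)) p.1 :=
      HasDerivAt.prodMk (hasDerivAt_id p.1) (hasDerivAt_const p.1 p.2)
    have h2 : HasDerivAt (fun s => fderiv ℝ A (s, p.2))
        (fderiv ℝ (fderiv ℝ A) p (1,0)) p.1 := by
      have := (hfAdiff p hp).hasFDerivAt.comp_hasDerivAt p.1 h1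
      exact this
    have := (ContinuousLinearMap.apply ℝ (Matrix (Fin m) (Fin m) ℝ)
      ((1:ℝ),(0:ℝ))).hasFDerivAt.comp_hasDerivAt p.1 h2
    exact this
  -- MVT estimates
  have mvtA : ∀ t ∈ Icc (0:ℝ) 1, ∀ ε ∈ Icc (0:ℝ) 1, ∀ ε' ∈ Icc (0:ℝ) 1, ε ≤ ε' →
      ‖A (ε', t) - A (ε, t)‖ ≤ L1 * (ε' - ε) := by
    intro t ht ε hε ε' hε' hle
    have hsub : Icc ε ε' ⊆ Icc (0:ℝ) 1 := Icc_subset_Icc hε.1 hε'.2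
    have := norm_image_sub_le_of_norm_deriv_le_segment'
      (f := fun s => A (s, t)) (f' := fun s => fderiv ℝ A (s, t) (1,0)) (C := L1)
      (a := ε) (b := ε')
      (fun s hs => (hAe (s, t) (hQV (hQmem (hsub hs) ht))).hasDerivWithinAt)
      (fun s hs => by
        calc ‖fderiv ℝ A (s, t) (1,0)‖ ≤ ‖fderiv ℝ A (s, t)‖ * ‖((1:ℝ),(0:ℝ))‖ :=
              ContinuousLinearMap.le_opNorm _ _
          _ ≤ L1 := by rw [hnorm10, mul_one]; exact hL1 _ (hQmem (hsub (Ico_subset_Icc_self hs)) ht))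
      ε' (right_mem_Icc.2 hle)
    exact this
  have mvtfA : ∀ t ∈ Icc (0:ℝ) 1, ∀ ε ∈ Icc (0:ℝ) 1, ∀ ε' ∈ Icc (0:ℝ) 1, ε ≤ ε' →
      ∀ s ∈ Icc ε ε',
      ‖fderiv ℝ A (s, t) (1,0) - fderiv ℝ A (ε, t) (1,0)‖ ≤ L2 * (s - ε) := by
    intro t ht ε hε ε' hε' hle s hs
    have hsub : Icc ε ε' ⊆ Icc (0:ℝ) 1 := Icc_subset_Icc hε.1 hε'.2
    exact norm_image_sub_le_of_norm_deriv_le_segment'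
      (f := fun s => fderiv ℝ A (s, t) (1,0))
      (f' := fun s => fderiv ℝ (fderiv ℝ A) (s, t) (1,0) (1,0)) (C := L2)
      (a := ε) (b := ε')
      (fun u hu => (hfAe (u, t) (hQV (hQmem (hsub hu) ht))).hasDerivWithinAt)
      (fun u hu => by
        have e1 : ‖fderiv ℝ (fderiv ℝ A) (u, t) (1,0) (1,0)‖ ≤
            ‖fderiv ℝ (fderiv ℝ A) (u, t) (1,0)‖ := by
          have := ContinuousLinearMap.le_opNorm
            (fderiv ℝ (fderiv ℝ A) (u, t) (1,0)) ((1:ℝ),(0:ℝ))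
          rwa [hnorm10, mul_one] at this
        have e2 : ‖fderiv ℝ (fderiv ℝ A) (u, t) (1,0)‖ ≤
            ‖fderiv ℝ (fderiv ℝ A) (u, t)‖ := by
          have := ContinuousLinearMap.le_opNorm
            (fderiv ℝ (fderiv ℝ A) (u, t)) ((1:ℝ),(0:ℝ))
          rwa [hnorm10, mul_one] at this
        exact e1.trans (e2.trans (hL2 _ (hQmem (hsub (Ico_subset_Icc_self hu)) ht))))
      s hs
  have taylor : ∀ t ∈ Icc (0:ℝ) 1, ∀ ε ∈ Icc (0:ℝ) 1, ∀ ε' ∈ Icc (0:ℝ) 1, ε ≤ ε' →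
      ‖A (ε', t) - A (ε, t) - (ε' - ε) • fderiv ℝ A (ε, t) (1,0)‖ ≤
        L2 * (ε' - ε) * (ε' - ε) := by
    intro t ht ε hε ε' hε' hle
    have hsub : Icc ε ε' ⊆ Icc (0:ℝ) 1 := Icc_subset_Icc hε.1 hε'.2
    set c := fderiv ℝ A (ε, t) (1,0) with hcdef
    have hmain := norm_image_sub_le_of_norm_deriv_le_segment'
      (f := fun s => A (s, t) - s • c)
      (f' := fun s => fderiv ℝ A (s, t) (1,0) - c) (C := L2 * (ε' - ε))
      (a := ε) (b := ε')
      (fun s hs => by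
        have h1 := (hAe (s, t) (hQV (hQmem (hsub hs) ht))).hasDerivWithinAt
          (s := Icc ε ε')
        have h2 : HasDerivWithinAt (fun s : ℝ => s • c) ((1:ℝ) • c) (Icc ε ε') s :=
          ((hasDerivAt_id s).smul_const c).hasDerivWithinAt
        have := h1.sub h2
        rw [one_smul] at this
        exact this)
      (fun s hs => by
        calc ‖fderiv ℝ A (s, t) (1,0) - c‖ ≤ L2 * (s - ε) :=
              mvtfA t ht ε hε ε' hε' hle s (Ico_subset_Icc_self hs)
          _ ≤ L2 * (ε' - ε) := by gcongr; exact hs.2.le)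
      ε' (right_mem_Icc.2 hle)
    have heq : (A (ε', t) - ε' • c) - (A (ε, t) - ε • c) =
        A (ε', t) - A (ε, t) - (ε' - ε) • c := by
      rw [sub_smul]; abel
    rw [heq] at hmain
    exact hmain
  -- Lipschitz property of the fields
  have hlipv : ∀ ε ∈ Icc (0:ℝ) 1, ∀ t ∈ Icc (0:ℝ) 1,
      LipschitzWith KKn (fun y => A (ε, t) * y) := by
    intro ε hε t ht
    apply LipschitzWith.of_dist_le_mul
    intro y y'
    rw [dist_eq_norm, dist_eq_norm, ← mul_sub]
    calc ‖A (ε,t) * (y - y')‖ ≤ (m:ℝ) * ‖A (ε,t)‖ * ‖y - y'‖ := mat_norm_mul _ _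
      _ ≤ KK * ‖y - y'‖ := by
          apply mul_le_mul_of_nonneg_right _ (norm_nonneg _)
          have := hLA _ (hQmem hε ht)
          rw [hKKdef]
          nlinarith [Nat.cast_nonneg (α := ℝ) m]
  -- a priori bound on solutions
  have hsolbound : ∀ ε ∈ Icc (0:ℝ) 1, ∀ g : ℝ → Matrix (Fin m) (Fin m) ℝ, g 0 = 1 →
      (∀ t ∈ Icc (0:ℝ) 1, HasDerivWithinAt g (A (ε,t) * g t) (Icc (0:ℝ) 1) t) →
      ∀ t ∈ Icc (0:ℝ) 1, ‖g t‖ ≤ GG := by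
    intro ε hε g hg0 hg t ht
    have hone : ‖(1 : Matrix (Fin m) (Fin m) ℝ)‖ ≤ 1 := by
      rw [Matrix.norm_le_iff zero_le_one]
      intro i j
      by_cases h : i = j <;> simp [Matrix.one_apply, h]
    have := apriori_bound (v := fun t y => A (ε, t) * y) KKn hKK0
      (hlipv ε hε) (M₀ := 0) le_rfl
      (fun t ht => by simp) (x₀ := (1 : Matrix (Fin m) (Fin m) ℝ))
      zero_le_one le_rfl hg0 hg t ht
    calc ‖g t‖ ≤ (‖(1 : Matrix (Fin m) (Fin m) ℝ)‖ + 0) * Real.exp KKn := this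
      _ ≤ 1 * Real.exp KK := by
          rw [hKKn]
          apply mul_le_mul_of_nonneg_right _ (Real.exp_pos _).le
          simpa using hone
      _ = GG := by rw [one_mul]
  -- existence of solutions
  have hex : ∀ ε ∈ Icc (0:ℝ) 1, ∃ g : ℝ → Matrix (Fin m) (Fin m) ℝ, g 0 = 1 ∧
      ∀ t ∈ Icc (0:ℝ) 1, HasDerivWithinAt g (A (ε,t) * g t) (Icc (0:ℝ) 1) t := by
    intro ε hε
    apply exists_solution_Icc (v := fun t y => A (ε, t) * y) KKn hKK0 (hlipv ε hε)
    intro x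
    have hcA : ContinuousOn (fun t => A (ε, t)) (Icc (0:ℝ) 1) := by
      apply (hA.continuousOn.mono hQV).comp
        (Continuous.continuousOn (by continuity))
      intro t ht
      exact hQmem hε ht
    exact hcA.mul continuousOn_const
  -- error constants
  set E1 : ℝ := (m:ℝ) * L2 * GG + (m:ℝ)^2 * L1 * LB * GG with hE1def
  have hE10 : 0 ≤ E1 := by positivity
  set CC : ℝ := E1 * Real.exp KK with hCCdef
  have hCC0 : 0 ≤ CC := by positivity
  -- one-step comparison
  have step : ∀ ε ∈ Icc (0:ℝ) 1, ∀ ε' ∈ Icc (0:ℝ) 1, ε ≤ ε' →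
      ∀ g g' : ℝ → Matrix (Fin m) (Fin m) ℝ,
      g 0 = 1 → (∀ t ∈ Icc (0:ℝ) 1, HasDerivWithinAt g (A (ε,t) * g t) (Icc (0:ℝ) 1) t) →
      g' 0 = 1 → (∀ t ∈ Icc (0:ℝ) 1, HasDerivWithinAt g' (A (ε',t) * g' t) (Icc (0:ℝ) 1) t) →
      ‖g' 1 - g 1‖ ≤ CC * (ε' - ε)^2 := by
    intro ε hε ε' hε' hle g g' hgz hg hg'z hg'
    have hΔ0 : 0 ≤ ε' - ε := sub_nonneg.2 hle
    have hgb : ∀ t ∈ Icc (0:ℝ) 1, ‖g t‖ ≤ GG := hsolbound ε hε g hgz hg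
    set φ : ℝ → Matrix (Fin m) (Fin m) ℝ :=
      fun t => (1 + (ε' - ε) • B (ε, t)) * g t with hφdef
    set ψ : ℝ → Matrix (Fin m) (Fin m) ℝ := fun t =>
      ((ε' - ε) • fderiv ℝ B (ε, t) (0,1)) * g t
        + (1 + (ε' - ε) • B (ε, t)) * (A (ε,t) * g t) with hψdef
    have hφd : ∀ t ∈ Icc (0:ℝ) 1, HasDerivWithinAt φ (ψ t) (Icc (0:ℝ) 1) t := by
      intro t ht
      have h1 : HasDerivWithinAt (fun s => 1 + (ε' - ε) • B (ε, s))
          ((ε' - ε) • fderiv ℝ B (ε, t) (0,1)) (Icc (0:ℝ) 1) t := by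
        have hb := ((hBt (ε, t) (hQV (hQmem hε ht))).hasDerivWithinAt
          (s := Icc (0:ℝ) 1)).const_smul (ε' - ε)
        have := (hasDerivWithinAt_const t _ (1:Matrix (Fin m) (Fin m) ℝ)).add hb
        rw [zero_add] at this
        exact this
      have h2 := DevAux.HasDerivWithinAt.matmul h1 (hg t ht)
      exact h2
    -- error estimate
    have herr : ∀ t ∈ Ico (0:ℝ) 1, dist (ψ t) (A (ε', t) * φ t) ≤ E1 * (ε' - ε)^2 := by
      intro t ht'
      have ht : t ∈ Icc (0:ℝ) 1 := Ico_subset_Icc_self ht'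
      have hkey := key (ε, t) (hQmem hε ht)
      rw [dist_eq_norm']
      have hiden : A (ε', t) * φ t - ψ t =
          (A (ε', t) - A (ε, t) - (ε' - ε) • fderiv ℝ A (ε, t) (1,0)) * g t
          + (ε' - ε) • ((A (ε', t) - A (ε, t)) * (B (ε, t) * g t))
          + (ε' - ε) • ((fderiv ℝ A (ε, t) (1,0) - fderiv ℝ B (ε, t) (0,1)
              - (B (ε, t) * A (ε, t) - A (ε, t) * B (ε, t))) * g t) := by
        show A (ε', t) * ((1 + (ε' - ε) • B (ε, t)) * g t)
            - (((ε' - ε) • fderiv ℝ B (ε, t) (0,1)) * g t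
              + (1 + (ε' - ε) • B (ε, t)) * (A (ε,t) * g t)) = _
        simp only [add_mul, mul_add, sub_mul, mul_sub, smul_mul_assoc, mul_smul_comm,
          one_mul, mul_one, smul_sub, smul_add, mul_assoc]
        abel
      rw [hkey, sub_self, zero_mul, smul_zero, add_zero] at hiden
      rw [hiden]
      have h2 : ‖A (ε', t) - A (ε, t)‖ ≤ L1 * (ε' - ε) := mvtA t ht ε hε ε' hε' hle
      have h3 : ‖g t‖ ≤ GG := hgb t ht
      have h4 : ‖B (ε, t)‖ ≤ LB := hLB _ (hQmem hε ht)
      have h1 : ‖A (ε', t) - A (ε, t) - (ε' - ε) • fderiv ℝ A (ε, t) (1,0)‖ ≤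
          L2 * (ε' - ε) * (ε' - ε) := taylor t ht ε hε ε' hε' hle
      have h5 : ‖B (ε, t) * g t‖ ≤ (m:ℝ) * LB * GG := by
        calc ‖B (ε, t) * g t‖ ≤ (m:ℝ) * ‖B (ε, t)‖ * ‖g t‖ := mat_norm_mul _ _
          _ ≤ (m:ℝ) * LB * GG :=
            mul_le_mul (mul_le_mul_of_nonneg_left h4 (Nat.cast_nonneg m)) h3
              (norm_nonneg _) (mul_nonneg (Nat.cast_nonneg m) hLB0)
      have h6 : ‖(A (ε', t) - A (ε, t)) * (B (ε, t) * g t)‖ ≤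
          (m:ℝ) * (L1 * (ε' - ε)) * ((m:ℝ) * LB * GG) := by
        calc ‖(A (ε', t) - A (ε, t)) * (B (ε, t) * g t)‖
            ≤ (m:ℝ) * ‖A (ε', t) - A (ε, t)‖ * ‖B (ε, t) * g t‖ := mat_norm_mul _ _
          _ ≤ (m:ℝ) * (L1 * (ε' - ε)) * ((m:ℝ) * LB * GG) :=
            mul_le_mul (mul_le_mul_of_nonneg_left h2 (Nat.cast_nonneg m)) h5
              (norm_nonneg _)
              (mul_nonneg (Nat.cast_nonneg m) (mul_nonneg hL10 hΔ0))
      have h7 : ‖(A (ε', t) - A (ε, t) - (ε' - ε) • fderiv ℝ A (ε, t) (1,0)) * g t‖ ≤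
          (m:ℝ) * (L2 * (ε' - ε) * (ε' - ε)) * GG := by
        calc ‖(A (ε', t) - A (ε, t) - (ε' - ε) • fderiv ℝ A (ε, t) (1,0)) * g t‖
            ≤ (m:ℝ) * ‖A (ε', t) - A (ε, t) - (ε' - ε) • fderiv ℝ A (ε, t) (1,0)‖ * ‖g t‖ :=
              mat_norm_mul _ _
          _ ≤ (m:ℝ) * (L2 * (ε' - ε) * (ε' - ε)) * GG :=
            mul_le_mul (mul_le_mul_of_nonneg_left h1 (Nat.cast_nonneg m)) h3
              (norm_nonneg _)
              (mul_nonneg (Nat.cast_nonneg m)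
                (mul_nonneg (mul_nonneg hL20 hΔ0) hΔ0))
      calc ‖(A (ε', t) - A (ε, t) - (ε' - ε) • fderiv ℝ A (ε, t) (1,0)) * g t
            + (ε' - ε) • ((A (ε', t) - A (ε, t)) * (B (ε, t) * g t))‖
          ≤ ‖(A (ε', t) - A (ε, t) - (ε' - ε) • fderiv ℝ A (ε, t) (1,0)) * g t‖
            + ‖(ε' - ε) • ((A (ε', t) - A (ε, t)) * (B (ε, t) * g t))‖ := norm_add_le _ _
        _ ≤ (m:ℝ) * (L2 * (ε' - ε) * (ε' - ε)) * GG
            + (ε' - ε) * ((m:ℝ) * (L1 * (ε' - ε)) * ((m:ℝ) * LB * GG)) := by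
            apply add_le_add h7
            rw [norm_smul, Real.norm_eq_abs, abs_of_nonneg hΔ0]
            exact mul_le_mul_of_nonneg_left h6 hΔ0
        _ ≤ E1 * (ε' - ε)^2 := by rw [hE1def]; ring_nf; nlinarith [hGG0.le, hL20, hL10, hLB0, hΔ0, Nat.cast_nonneg (α := ℝ) m]
    -- Grönwall comparison
    have hτ : ∀ t : ℝ, max 0 (min 1 t) ∈ Icc (0:ℝ) 1 :=
      fun t => ⟨le_max_left _ _, max_le zero_le_one (min_le_left _ _)⟩
    have hτeq : ∀ t ∈ Ico (0:ℝ) 1, max 0 (min 1 t) = t := by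
      intro t ht
      rw [min_eq_right ht.2.le, max_eq_right ht.1]
    have happrox := dist_le_of_approx_trajectories_ODE
      (v := fun t y => A (ε', max 0 (min 1 t)) * y) (K := KKn)
      (f := g') (f' := fun t => A (ε', t) * g' t) (g := φ) (g' := ψ)
      (εf := 0) (εg := E1 * (ε' - ε)^2) (δ := 0) (a := 0) (b := 1)
      (fun t => hlipv ε' hε' _ (hτ t))
      (fun t ht => (hg' t ht).continuousWithinAt)
      (fun t ht => DevAux.hdw_Ici (hg' t (Ico_subset_Icc_self ht)) ht.1 ht.2)
      (fun t ht => by simp only [hτeq t ht]; simp)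
      (fun t ht => (hφd t ht).continuousWithinAt)
      (fun t ht => DevAux.hdw_Ici (hφd t (Ico_subset_Icc_self ht)) ht.1 ht.2)
      (fun t ht => by simp only [hτeq t ht]; exact herr t ht)
      (by
        have hφ0 : φ 0 = 1 := by
          show (1 + (ε' - ε) • B (ε, 0)) * g 0 = 1
          rw [hB0 ε hε, smul_zero, add_zero, hgz, one_mul]
        rw [hg'z, hφ0, dist_self])
    have hfin := happrox 1 ⟨zero_le_one, le_rfl⟩
    have hφ1 : φ 1 = g 1 := by
      show (1 + (ε' - ε) • B (ε, 1)) * g 1 = g 1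
      rw [hB1 ε hε, smul_zero, add_zero, one_mul]
    rw [hφ1] at hfin
    rw [← dist_eq_norm]
    calc dist (g' 1) (g 1) ≤ gronwallBound 0 KKn (0 + E1 * (ε' - ε)^2) (1 - 0) := hfin
      _ ≤ (0 + (0 + E1 * (ε' - ε)^2)) * Real.exp KKn := by
          apply DevAux.gronwallBound_le le_rfl _ _ (by norm_num) (by norm_num)
          · exact hKK0
          · have := mul_nonneg hE10 (sq_nonneg (ε' - ε))
            linarith
      _ = CC * (ε' - ε)^2 := by rw [hCCdef, hKKn]; ring
  -- chaining over a subdivision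
  have chain : ∀ N : ℕ, 0 < N → ‖g₁ 1 - g₀ 1‖ ≤ CC * (1 / (N:ℝ)) := by
    intro N hN
    have hNR : (0:ℝ) < (N:ℝ) := by exact_mod_cast hN
    have hmem : ∀ k : ℕ, k ≤ N → ((k:ℝ)/(N:ℝ)) ∈ Icc (0:ℝ) 1 := by
      intro k hk
      constructor
      · positivity
      · rw [div_le_one hNR]; exact_mod_cast hk
    have ind : ∀ k : ℕ, k ≤ N → ∀ g : ℝ → Matrix (Fin m) (Fin m) ℝ,
        g 0 = 1 →
        (∀ t ∈ Icc (0:ℝ) 1, HasDerivWithinAt g (A ((k:ℝ)/(N:ℝ),t) * g t) (Icc (0:ℝ) 1) t) →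
        ‖g 1 - g₀ 1‖ ≤ (k:ℝ) * (CC * (1/(N:ℝ))^2) := by
      intro k
      induction k with
      | zero =>
        intro _ g hgz hg
        have h0 : ((0:ℕ):ℝ)/(N:ℝ) = 0 := by simp
        rw [h0] at hg
        have hstep0 := step 0 (left_mem_Icc.2 zero_le_one) 0 (left_mem_Icc.2 zero_le_one) le_rfl
          g₀ g hg₀0 hg₀ hgz hg
        have h1 : CC * ((0:ℝ) - 0)^2 = 0 := by ring
        rw [h1] at hstep0
        have h0' : ((0:ℕ):ℝ) * (CC * (1/(N:ℝ))^2) = 0 := by simp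
        rw [h0']
        linarith
      | succ k ih =>
        intro hk1 g hgz hg
        have hkN : k ≤ N := le_of_lt (Nat.lt_of_succ_le hk1)
        obtain ⟨gk, hgk0, hgkd⟩ := hex ((k:ℝ)/(N:ℝ)) (hmem k hkN)
        have hstepk := step ((k:ℝ)/(N:ℝ)) (hmem k hkN) (((k:ℕ)+1:ℝ)/(N:ℝ))
          (by exact_mod_cast hmem (k+1) hk1)
          ((div_le_div_iff_of_pos_right hNR).2 (by linarith))
          gk g hgk0 hgkd hgz
          (by
            have : (((k:ℕ)+1:ℝ)/(N:ℝ)) = (((k+1:ℕ)):ℝ)/(N:ℝ) := by push_cast; ring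
            rw [this]
            exact hg)
        have hih := ih hkN gk hgk0 hgkd
        have htri : ‖g 1 - g₀ 1‖ ≤ ‖g 1 - gk 1‖ + ‖gk 1 - g₀ 1‖ := by
          have := norm_add_le (g 1 - gk 1) (gk 1 - g₀ 1)
          simpa using this
        have hΔval : (((k:ℕ)+1:ℝ)/(N:ℝ) - (k:ℝ)/(N:ℝ))^2 = (1/(N:ℝ))^2 := by
          field_simp
          ring
        calc ‖g 1 - g₀ 1‖ ≤ ‖g 1 - gk 1‖ + ‖gk 1 - g₀ 1‖ := htri
          _ ≤ CC * (((k:ℕ)+1:ℝ)/(N:ℝ) - (k:ℝ)/(N:ℝ))^2 + (k:ℝ) * (CC * (1/(N:ℝ))^2) :=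
              add_le_add hstepk hih
          _ = ((k:ℕ)+1:ℝ) * (CC * (1/(N:ℝ))^2) := by rw [hΔval]; ring
          _ = (((k+1:ℕ)):ℝ) * (CC * (1/(N:ℝ))^2) := by push_cast; ring
    have hNN : ((N:ℝ))/(N:ℝ) = 1 := div_self hNR.ne'
    have hg₁' : ∀ t ∈ Icc (0:ℝ) 1,
        HasDerivWithinAt g₁ (A ((N:ℝ)/(N:ℝ),t) * g₁ t) (Icc (0:ℝ) 1) t := by
      rw [hNN]; exact hg₁
    have := ind N le_rfl g₁ hg₁0 hg₁'
    calc ‖g₁ 1 - g₀ 1‖ ≤ (N:ℝ) * (CC * (1/(N:ℝ))^2) := this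
      _ = CC * (1/(N:ℝ)) := by field_simp
  -- conclusion
  have hzero : ‖g₁ 1 - g₀ 1‖ ≤ 0 := by
    by_contra hpos
    push_neg at hpos
    obtain ⟨N, hNgt⟩ := exists_nat_gt (CC / ‖g₁ 1 - g₀ 1‖)
    have hN0 : 0 < N := by
      by_contra hN0
      push_neg at hN0
      interval_cases N
      · simp at hNgt
        exact absurd hNgt (not_lt.2 (div_nonneg hCC0 (norm_nonneg _)))
    have h1 := chain N hN0
    have hNR : (0:ℝ) < (N:ℝ) := by exact_mod_cast hN0
    have h2 : CC * (1/(N:ℝ)) < ‖g₁ 1 - g₀ 1‖ := by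
      rw [mul_one_div, div_lt_iff₀ hNR]
      calc CC = (CC / ‖g₁ 1 - g₀ 1‖) * ‖g₁ 1 - g₀ 1‖ := by field_simp
        _ < (N:ℝ) * ‖g₁ 1 - g₀ 1‖ := by
            apply mul_lt_mul_of_pos_right hNgt hpos
        _ = ‖g₁ 1 - g₀ 1‖ * (N:ℝ) := by ring
    linarith
  have : g₁ 1 - g₀ 1 = 0 := by
    have := norm_le_zero_iff.1 hzero
    exact this
  have := sub_eq_zero.1 this
  exact this.symm

end DevAux

/-- Homotopy invariance of development: if `ω` is a Maurer–Cartan form on an open `U ⊆ ℝⁿ`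
(valued in the Lie algebra `Matrix m m ℝ` of `GL(m,ℝ)`) and `γ₀, γ₁ : [0,1] → U` are smooth
paths with the same endpoints that are smoothly homotopic rel endpoints, then the developments
`g₀, g₁` of `ω` along `γ₀, γ₁` (solutions of `g(0) = I`, `g'(t) = ω_{γ(t)}(γ'(t)) * g(t)`)
have the same endpoint: `g₀ 1 = g₁ 1`. -/
theorem development_homotopy_invariance {n m : ℕ}
    (U : Set (Fin n → ℝ)) (hUopen : IsOpen U)
    (ω : (Fin n → ℝ) → ((Fin n → ℝ) →L[ℝ] Matrix (Fin m) (Fin m) ℝ))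
    (hω : ContDiffOn ℝ (⊤ : ℕ∞) ω U)
    (hMC : ∀ x ∈ U, ∀ u v : Fin n → ℝ,
      fderivWithin ℝ ω U x u v - fderivWithin ℝ ω U x v u =
        ω x u * ω x v - ω x v * ω x u)
    (γ₀ γ₁ : ℝ → (Fin n → ℝ)) (hγ₀ : ContDiff ℝ (⊤ : ℕ∞) γ₀) (hγ₁ : ContDiff ℝ (⊤ : ℕ∞) γ₁)
    (hγ₀U : ∀ t ∈ Set.Icc (0 : ℝ) 1, γ₀ t ∈ U)
    (hγ₁U : ∀ t ∈ Set.Icc (0 : ℝ) 1, γ₁ t ∈ U)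
    (hstart : γ₀ 0 = γ₁ 0) (hend : γ₀ 1 = γ₁ 1)
    (Hmt : ℝ → ℝ → (Fin n → ℝ))
    (hHsmooth : ContDiff ℝ (⊤ : ℕ∞) (fun p : ℝ × ℝ => Hmt p.1 p.2))
    (hHU : ∀ ε ∈ Set.Icc (0 : ℝ) 1, ∀ t ∈ Set.Icc (0 : ℝ) 1, Hmt ε t ∈ U)
    (hH0 : ∀ t ∈ Set.Icc (0 : ℝ) 1, Hmt 0 t = γ₀ t)
    (hH1 : ∀ t ∈ Set.Icc (0 : ℝ) 1, Hmt 1 t = γ₁ t)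
    (hHstart : ∀ ε ∈ Set.Icc (0 : ℝ) 1, Hmt ε 0 = γ₀ 0)
    (hHend : ∀ ε ∈ Set.Icc (0 : ℝ) 1, Hmt ε 1 = γ₀ 1)
    (g₀ g₁ : ℝ → Matrix (Fin m) (Fin m) ℝ)
    (hg₀0 : g₀ 0 = 1) (hg₁0 : g₁ 0 = 1)
    (hg₀ : ∀ t ∈ Set.Icc (0 : ℝ) 1, HasDerivAt g₀ (ω (γ₀ t) (deriv γ₀ t) * g₀ t) t)
    (hg₁ : ∀ t ∈ Set.Icc (0 : ℝ) 1, HasDerivAt g₁ (ω (γ₁ t) (deriv γ₁ t) * g₁ t) t) :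
    g₀ 1 = g₁ 1 := by
  classical
  set P : ℝ × ℝ → (Fin n → ℝ) := fun p : ℝ × ℝ => Hmt p.1 p.2 with hPdef
  have hP : ContDiff ℝ (⊤ : ℕ∞) P := hHsmooth
  set W : ℝ × ℝ → (ℝ × ℝ →L[ℝ] (Fin n → ℝ)) := fun p => fderiv ℝ P p with hWdef
  have hWc : ContDiff ℝ (⊤ : ℕ∞) W := hP.fderiv_right (by simp)
  set V : Set (ℝ × ℝ) := P ⁻¹' U with hVdef
  have hV : IsOpen V := hUopen.preimage hP.continuous
  have hQV : Icc (0:ℝ) 1 ×ˢ Icc (0:ℝ) 1 ⊆ V := fun p hp => hHU p.1 hp.1 p.2 hp.2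
  set A : ℝ × ℝ → Matrix (Fin m) (Fin m) ℝ := fun p => ω (P p) (W p (0,1)) with hAdef
  set B : ℝ × ℝ → Matrix (Fin m) (Fin m) ℝ := fun p => ω (P p) (W p (1,0)) with hBdef
  -- smoothness
  have hωP : ContDiffOn ℝ (⊤ : ℕ∞) (fun p => ω (P p)) V :=
    hω.comp hP.contDiffOn (fun p hp => hp)
  have hAc : ContDiffOn ℝ 2 A V :=
    (hωP.clm_apply ((hWc.clm_apply contDiff_const).contDiffOn)).of_le (WithTop.coe_le_coe.2 le_top)
  have hBc : ContDiffOn ℝ 1 B V :=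
    (hωP.clm_apply ((hWc.clm_apply contDiff_const).contDiffOn)).of_le (by simp)
  -- pointwise derivative machinery
  have hPd : ∀ p, HasFDerivAt P (W p) p := fun p =>
    (hP.differentiable (by simp)).differentiableAt.hasFDerivAt
  have hWd : ∀ p, HasFDerivAt W (fderiv ℝ W p) p := fun p =>
    (hWc.differentiable (by simp)).differentiableAt.hasFDerivAt
  have hωd : ∀ x ∈ U, HasFDerivAt ω (fderiv ℝ ω x) x := fun x hx =>
    ((hω.differentiableOn (by simp)).differentiableAt (hUopen.mem_nhds hx)).hasFDerivAt
  have hfderiv : ∀ (e : ℝ × ℝ), ∀ p : ℝ × ℝ, P p ∈ U → ∀ w : ℝ × ℝ,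
      fderiv ℝ (fun q => ω (P q) (W q e)) p w =
        fderiv ℝ ω (P p) (W p w) (W p e) + ω (P p) (fderiv ℝ W p w e) := by
    intro e p hp w
    have hc : HasFDerivAt (fun q => ω (P q)) ((fderiv ℝ ω (P p)).comp (W p)) p :=
      (hωd _ hp).comp p (hPd p)
    have hu := (hWd p).clm_apply (hasFDerivAt_const e p)
    have hA' := hc.clm_apply hu
    rw [show fderiv ℝ (fun q => ω (P q) (W q e)) p = _ from hA'.fderiv]
    simp [ContinuousLinearMap.add_apply, ContinuousLinearMap.comp_apply,
      ContinuousLinearMap.flip_apply]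
    exact add_comm _ _
  -- the flatness identity
  have key : ∀ p ∈ Icc (0:ℝ) 1 ×ˢ Icc (0:ℝ) 1,
      fderiv ℝ A p (1,0) - fderiv ℝ B p (0,1) = B p * A p - A p * B p := by
    intro p hp
    have hPU : P p ∈ U := hQV hp
    have h1 : fderiv ℝ A p (1,0) =
        fderiv ℝ ω (P p) (W p (1,0)) (W p (0,1)) + ω (P p) (fderiv ℝ W p (1,0) (0,1)) :=
      hfderiv (0,1) p hPU (1,0)
    have h2 : fderiv ℝ B p (0,1) =
        fderiv ℝ ω (P p) (W p (0,1)) (W p (1,0)) + ω (P p) (fderiv ℝ W p (0,1) (1,0)) :=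
      hfderiv (1,0) p hPU (0,1)
    have hsymm : fderiv ℝ W p (1,0) (0,1) = fderiv ℝ W p (0,1) (1,0) :=
      second_derivative_symmetric (f := P) (f' := W) (f'' := fderiv ℝ W p)
        (fun y => hPd y) (hWd p) _ _
    have hMC' : fderiv ℝ ω (P p) (W p (1,0)) (W p (0,1))
        - fderiv ℝ ω (P p) (W p (0,1)) (W p (1,0)) =
        ω (P p) (W p (1,0)) * ω (P p) (W p (0,1))
          - ω (P p) (W p (0,1)) * ω (P p) (W p (1,0)) := by
      have := hMC (P p) hPU (W p (1,0)) (W p (0,1))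
      rwa [fderivWithin_of_isOpen hUopen hPU] at this
    calc fderiv ℝ A p (1,0) - fderiv ℝ B p (0,1)
        = (fderiv ℝ ω (P p) (W p (1,0)) (W p (0,1)) + ω (P p) (fderiv ℝ W p (1,0) (0,1)))
          - (fderiv ℝ ω (P p) (W p (0,1)) (W p (1,0)) + ω (P p) (fderiv ℝ W p (0,1) (1,0))) := by
          rw [h1, h2]
      _ = fderiv ℝ ω (P p) (W p (1,0)) (W p (0,1))
          - fderiv ℝ ω (P p) (W p (0,1)) (W p (1,0)) := by rw [hsymm]; abel
      _ = B p * A p - A p * B p := hMC'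
  -- vanishing of B on the horizontal edges
  have hWvert : ∀ (t₀ : ℝ) (c : Fin n → ℝ), (∀ s ∈ Icc (0:ℝ) 1, Hmt s t₀ = c) →
      ∀ ε ∈ Icc (0:ℝ) 1, W (ε, t₀) (1,0) = 0 := by
    intro t₀ c hconst ε hε
    have hline : HasDerivAt (fun s => ((s, t₀) : ℝ × ℝ)) ((1:ℝ),(0:ℝ)) ε :=
      HasDerivAt.prodMk (hasDerivAt_id ε) (hasDerivAt_const ε t₀)
    have hc : HasDerivAt (fun s => P (s, t₀)) (W (ε, t₀) (1,0)) ε := by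
      have := (hPd (ε, t₀)).comp_hasDerivAt ε hline
      exact this
    have hconst' : HasDerivWithinAt (fun s => P (s, t₀)) 0 (Icc (0:ℝ) 1) ε :=
      (hasDerivWithinAt_const ε _ c).congr (fun s hs => (hconst s hs).symm ▸ rfl)
        (by simpa using hconst ε hε)
    have hu := (uniqueDiffOn_Icc zero_lt_one) ε hε
    have e1 := (hc.hasDerivWithinAt (s := Icc (0:ℝ) 1)).derivWithin hu
    have e2 := hconst'.derivWithin hu
    rw [← e1, e2]
  have hB0 : ∀ ε ∈ Icc (0:ℝ) 1, B (ε,0) = 0 := by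
    intro ε hε
    show ω (P (ε,0)) (W (ε,0) (1,0)) = 0
    rw [hWvert 0 (γ₀ 0) hHstart ε hε]
    exact (ω _).map_zero
  have hB1 : ∀ ε ∈ Icc (0:ℝ) 1, B (ε,1) = 0 := by
    intro ε hε
    show ω (P (ε,1)) (W (ε,1) (1,0)) = 0
    rw [hWvert 1 (γ₀ 1) hHend ε hε]
    exact (ω _).map_zero
  -- matching of A with the given developments on the vertical edges
  have hWhoriz : ∀ (ε₀ : ℝ) (γ : ℝ → (Fin n → ℝ)), ContDiff ℝ (⊤ : ℕ∞) γ →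
      (∀ s ∈ Icc (0:ℝ) 1, Hmt ε₀ s = γ s) →
      ∀ t ∈ Icc (0:ℝ) 1, W (ε₀, t) (0,1) = deriv γ t := by
    intro ε₀ γ hγ hmatch t ht
    have hline : HasDerivAt (fun s => ((ε₀, s) : ℝ × ℝ)) ((0:ℝ),(1:ℝ)) t :=
      HasDerivAt.prodMk (hasDerivAt_const t ε₀) (hasDerivAt_id t)
    have hc : HasDerivAt (fun s => P (ε₀, s)) (W (ε₀, t) (0,1)) t := by
      have := (hPd (ε₀, t)).comp_hasDerivAt t hline
      exact this
    have hγd : HasDerivAt γ (deriv γ t) t :=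
      ((hγ.differentiable (by simp)).differentiableAt).hasDerivAt
    have hc2 : HasDerivWithinAt (fun s => P (ε₀, s)) (deriv γ t) (Icc (0:ℝ) 1) t :=
      (hγd.hasDerivWithinAt (s := Icc (0:ℝ) 1)).congr
        (fun s hs => hmatch s hs) (hmatch t ht)
    have hu := (uniqueDiffOn_Icc zero_lt_one) t ht
    have e1 := (hc.hasDerivWithinAt (s := Icc (0:ℝ) 1)).derivWithin hu
    have e2 := hc2.derivWithin hu
    rw [← e1, e2]
  have hg₀' : ∀ t ∈ Icc (0:ℝ) 1,
      HasDerivWithinAt g₀ (A (0,t) * g₀ t) (Icc (0:ℝ) 1) t := by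
    intro t ht
    have hval : A (0,t) = ω (γ₀ t) (deriv γ₀ t) := by
      show ω (P (0,t)) (W (0,t) (0,1)) = _
      rw [hWhoriz 0 γ₀ hγ₀ hH0 t ht]
      have : P (0,t) = γ₀ t := hH0 t ht
      rw [this]
    rw [hval]
    exact (hg₀ t ht).hasDerivWithinAt
  have hg₁' : ∀ t ∈ Icc (0:ℝ) 1,
      HasDerivWithinAt g₁ (A (1,t) * g₁ t) (Icc (0:ℝ) 1) t := by
    intro t ht
    have hval : A (1,t) = ω (γ₁ t) (deriv γ₁ t) := by
      show ω (P (1,t)) (W (1,t) (0,1)) = _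
      rw [hWhoriz 1 γ₁ hγ₁ hH1 t ht]
      have : P (1,t) = γ₁ t := hH1 t ht
      rw [this]
    rw [hval]
    exact (hg₁ t ht).hasDerivWithinAt
  exact DevAux.abstract A B V hV hQV hAc hBc key hB0 hB1 hg₀0 hg₁0 hg₀' hg₁'
end

section
/- Let G be a Lie group and let ξ₀, ξ₁, ξ: ℝ → T_1G be smooth curves such that ξ(t) = 2·ξ₀(2t) for all t ∈ [0, 1/2] and ξ(t) = 2·ξ₁(2t − 1) for all t ∈ [1/2, 1]. Let g₀, g₁, g be the developments of ξ₀, ξ₁, ξ respectively. Then g(1) = g₁(1)·g₀(1); that is, ∫₀¹(ξ₁ ⊙ ξ₀) = (∫₀¹ξ₁)·(∫₀¹ξ₀). -/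
open scoped Manifold

/-- The logarithmic derivative of a smooth curve `g : ℝ → G` in a Lie group, evaluated on the
standard unit tangent vector `∂/∂t`. -/
noncomputable def curveLogDeriv
    {E : Type*} [NormedAddCommGroup E] [NormedSpace ℝ E]
    {H : Type*} [TopologicalSpace H] (I : ModelWithCorners ℝ E H)
    {G : Type*} [TopologicalSpace G] [ChartedSpace H G] [Group G] [LieGroup I (⊤ : ℕ∞) G]
    (g : ℝ → G) (t : ℝ) : TangentSpace I (1 : G) :=
  mfderiv I I (fun h : G => h * (g t)⁻¹) (g t) (mfderiv 𝓘(ℝ, ℝ) I g t (1 : ℝ))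

/-- `g : ℝ → G` is the development of the curve `ξ : ℝ → T₁G`: it is smooth, starts at the
identity, and has logarithmic derivative `ξ`. One writes `∫₀ᵗ ξ := g t`. -/
def IsDevelopment
    {E : Type*} [NormedAddCommGroup E] [NormedSpace ℝ E]
    {H : Type*} [TopologicalSpace H] (I : ModelWithCorners ℝ E H)
    {G : Type*} [TopologicalSpace G] [ChartedSpace H G] [Group G] [LieGroup I (⊤ : ℕ∞) G]
    (ξ : ℝ → TangentSpace I (1 : G)) (g : ℝ → G) : Prop :=
  ContMDiff 𝓘(ℝ, ℝ) I (⊤ : ℕ∞) g ∧ g 0 = 1 ∧ ∀ t : ℝ, curveLogDeriv I g t = ξ t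

/-!
Write `δ` for the logarithmic derivative. For curves `b, c` in `G`, the product rule gives
`δ(b c) = δb + (L_b ∘ R_{(b c)⁻¹})_* ċ`, and the translation `z ↦ b z (b c)⁻¹` is a
diffeomorphism; so `δa = δb` on an interval exactly when `b⁻¹ a` has zero derivative there, i.e.
is constant (by the mean value theorem in a chart). By the chain rule and right invariance of `δ`,
`t ↦ g₀ (2t)` has logarithmic derivative `ξ` on `[0, 1/2]` and `t ↦ g₁ (2t - 1) g₀ 1` has
logarithmic derivative `ξ` on `[1/2, 1]`. Matching initial values gives `g (1/2) = g₀ 1`, and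
then `g 1 = g₁ 1 g₀ 1`.
-/

open Set Filter Topology Function

section Manifold

variable {E : Type*} [NormedAddCommGroup E] [NormedSpace ℝ E]
  {H : Type*} [TopologicalSpace H] {I : ModelWithCorners ℝ E H}
  {M : Type*} [TopologicalSpace M] [ChartedSpace H M]
  {F : Type*} [NormedAddCommGroup F] [NormedSpace ℝ F]
  {H' : Type*} [TopologicalSpace H'] {J : ModelWithCorners ℝ F H'}
  {N : Type*} [TopologicalSpace N] [ChartedSpace H' N]

theorem mfderiv_injective_of_leftInverse {f : M → N} {g : N → M} {x : M} (hgf : LeftInverse g f)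
    (hg : MDifferentiableAt J I g (f x)) (hf : MDifferentiableAt I J f x) :
    Injective (mfderiv I J f x) := by
  intro v w hvw
  have := congrArg (mfderiv J I g (f x)) hvw
  rwa [← mfderiv_comp_apply x hg hf, ← mfderiv_comp_apply x hg hf, hgf.comp_eq_id,
    mfderiv_id] at this

variable [IsManifold I 1 M] {c : ℝ → M} {s : Set ℝ}

theorem Convex.eventually_nhdsWithin_eq_of_mfderiv_eq_zero (hs : Convex ℝ s)
    (hc : ∀ t ∈ s, MDifferentiableAt 𝓘(ℝ, ℝ) I c t)
    (hc' : ∀ t ∈ s, mfderiv 𝓘(ℝ, ℝ) I c t = 0) {t₀ : ℝ} (ht₀ : t₀ ∈ s) :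
    ∀ᶠ t in 𝓝[s] t₀, c t = c t₀ := by
  set φ := extChartAt I (c t₀)
  obtain ⟨ε, hε, hball⟩ := Metric.mem_nhds_iff.mp
    ((hc t₀ ht₀).continuousAt.preimage_mem_nhds (extChartAt_source_mem_nhds (I := I) (c t₀)))
  set u := s ∩ Metric.ball t₀ ε
  have hderiv : ∀ r ∈ u, HasFDerivWithinAt (φ ∘ c) (0 : ℝ →L[ℝ] E) u r := by
    intro r ⟨hrs, hrε⟩
    have hsrc : c r ∈ (chartAt H (c t₀)).source := by
      simpa only [mem_preimage, extChartAt_source] using hball hrε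
    have h := (hasMFDerivAt_extChartAt hsrc).comp r (hc r hrs).hasMFDerivAt
    erw [hc' r hrs, ContinuousLinearMap.comp_zero] at h
    exact (hasMFDerivAt_iff_hasFDerivAt.mp h).hasFDerivWithinAt
  have hconst : ∀ t ∈ u, φ (c t) = φ (c t₀) := fun t ht => by
    simpa [sub_eq_zero] using
      (hs.inter (convex_ball t₀ ε)).norm_image_sub_le_of_norm_hasFDerivWithin_le hderiv (C := 0)
        (fun _ _ => by simp) ⟨ht₀, Metric.mem_ball_self hε⟩ ht
  filter_upwards [inter_mem_nhdsWithin s (Metric.ball_mem_nhds t₀ hε)] with t ht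
  exact φ.injOn (hball ht.2) (mem_extChartAt_source (c t₀)) (hconst t ht)

theorem Convex.apply_eq_of_mfderiv_eq_zero (hs : Convex ℝ s)
    (hc : ∀ t ∈ s, MDifferentiableAt 𝓘(ℝ, ℝ) I c t)
    (hc' : ∀ t ∈ s, mfderiv 𝓘(ℝ, ℝ) I c t = 0) {x y : ℝ} (hx : x ∈ s) (hy : y ∈ s) :
    c x = c y := by
  have := isPreconnected_iff_preconnectedSpace.mp hs.isPreconnected
  have hloc : IsLocallyConstant (s.domRestrict c) :=
    (IsLocallyConstant.iff_eventually_eq _).mpr fun t => by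
      have := hs.eventually_nhdsWithin_eq_of_mfderiv_eq_zero hc hc' t.2
      rwa [← map_nhds_subtype_val, eventually_map] at this
  exact hloc.apply_eq_of_preconnectedSpace ⟨x, hx⟩ ⟨y, hy⟩

end Manifold

section LieGroup

variable {E : Type*} [NormedAddCommGroup E] [NormedSpace ℝ E]
  {H : Type*} [TopologicalSpace H] {I : ModelWithCorners ℝ E H}
  {F : Type*} [NormedAddCommGroup F] [NormedSpace ℝ F]
  {H' : Type*} [TopologicalSpace H'] {J : ModelWithCorners ℝ F H'}
  {M : Type*} [TopologicalSpace M] [ChartedSpace H' M]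
  {G : Type*} [TopologicalSpace G] [ChartedSpace H G]

theorem mfderiv_mul_apply [Monoid G] [ContMDiffMul I 1 G] {f g : M → G} {z : M}
    (hf : MDifferentiableAt J I f z) (hg : MDifferentiableAt J I g z) (v : TangentSpace J z) :
    mfderiv J I (fun w => f w * g w) z v
      = mfderiv I I (· * g z) (f z) (mfderiv J I f z v)
        + mfderiv I I (f z * ·) (g z) (mfderiv J I g z v) := by
  have hμ : MDifferentiableAt (I.prod I) I (fun p : G × G => p.1 * p.2) (f z, g z) :=
    (contMDiff_mul I 1).mdifferentiableAt one_ne_zero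
  rw [show (fun w => f w * g w) = (fun p : G × G => p.1 * p.2) ∘ (fun w => (f w, g w)) from rfl,
    mfderiv_comp_apply z hμ (hf.prodMk hg), hf.mfderiv_prod hg, mfderiv_prod_eq_add_apply hμ]
  rfl

theorem mfderiv_mul_mul_injective [Group G] [ContMDiffMul I 1 G] (x y p : G) :
    Injective (mfderiv I I (fun z => x * z * y) p) :=
  mfderiv_injective_of_leftInverse (g := fun z => x⁻¹ * z * y⁻¹) (fun z => by group)
    (mdifferentiableAt_mul_right.comp _ mdifferentiableAt_mul_left)
    (mdifferentiableAt_mul_right.comp _ mdifferentiableAt_mul_left)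

variable [Group G] [LieGroup I (⊤ : ℕ∞) G]

theorem curveLogDeriv_mul_eq_iff {b c : ℝ → G} {t : ℝ} (hb : MDifferentiableAt 𝓘(ℝ, ℝ) I b t)
    (hc : MDifferentiableAt 𝓘(ℝ, ℝ) I c t) :
    curveLogDeriv I (fun s => b s * c s) t = curveLogDeriv I b t ↔
      mfderiv 𝓘(ℝ, ℝ) I c t = 0 := by
  set D := mfderiv I I (fun z => b t * z * (b t * c t)⁻¹) (c t)
  set v : TangentSpace I (1 : G) := D (mfderiv 𝓘(ℝ, ℝ) I c t 1)
  have hR : (· * (b t * c t)⁻¹) ∘ (· * c t) = (· * (b t)⁻¹) := by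
    funext z; simp [mul_assoc]
  have hprod : curveLogDeriv I (fun s => b s * c s) t = curveLogDeriv I b t + v := by
    unfold curveLogDeriv
    erw [mfderiv_mul_apply hb hc, map_add,
      ← mfderiv_comp_apply _ mdifferentiableAt_mul_right mdifferentiableAt_mul_right,
      ← mfderiv_comp_apply _ mdifferentiableAt_mul_right mdifferentiableAt_mul_left, hR]
    rfl
  rw [hprod, add_eq_left]
  refine ⟨fun h => ContinuousLinearMap.ext_ring ?_, fun h => ?_⟩
  · exact mfderiv_mul_mul_injective _ _ _ (h.trans (map_zero D).symm)
  · simp only [v, h]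
    exact map_zero D

theorem curveLogDeriv_mul_const {b : ℝ → G} {t : ℝ} (hb : MDifferentiableAt 𝓘(ℝ, ℝ) I b t)
    (k : G) : curveLogDeriv I (fun s => b s * k) t = curveLogDeriv I b t :=
  (curveLogDeriv_mul_eq_iff hb mdifferentiableAt_const).mpr mfderiv_const

theorem curveLogDeriv_comp {g : ℝ → G} {φ : ℝ → ℝ} {t : ℝ}
    (hg : MDifferentiableAt 𝓘(ℝ, ℝ) I g (φ t)) (hφ : DifferentiableAt ℝ φ t) :
    curveLogDeriv I (g ∘ φ) t = deriv φ t • curveLogDeriv I g (φ t) := by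
  have hφ' : mfderiv 𝓘(ℝ, ℝ) 𝓘(ℝ, ℝ) φ t (1 : ℝ) = deriv φ t := by
    rw [mfderiv_eq_fderiv]
    exact fderiv_apply_one_eq_deriv (f := φ) (x := t)
  unfold curveLogDeriv
  erw [mfderiv_comp_apply t hg (mdifferentiableAt_iff_differentiableAt.mpr hφ), hφ',
    ← map_smul, ← map_smul, smul_eq_mul, mul_one]
  rfl

theorem Convex.apply_eq_of_curveLogDeriv_eq {s : Set ℝ} (hs : Convex ℝ s) {a b : ℝ → G}
    (ha : ∀ t ∈ s, MDifferentiableAt 𝓘(ℝ, ℝ) I a t)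
    (hb : ∀ t ∈ s, MDifferentiableAt 𝓘(ℝ, ℝ) I b t)
    (hab : ∀ t ∈ s, curveLogDeriv I a t = curveLogDeriv I b t)
    {t₀ t₁ : ℝ} (ht₀ : t₀ ∈ s) (ht₁ : t₁ ∈ s) (h₀ : a t₀ = b t₀) : a t₁ = b t₁ := by
  set c : ℝ → G := fun s => (b s)⁻¹ * a s
  have hc : ∀ t ∈ s, MDifferentiableAt 𝓘(ℝ, ℝ) I c t := fun t ht =>
    ((contMDiff_mul I 1).mdifferentiableAt one_ne_zero).comp t
      ((((contMDiff_inv I 1).mdifferentiableAt one_ne_zero).comp t (hb t ht)).prodMk (ha t ht))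
  have hbc : (fun s => b s * c s) = a := funext fun s => mul_inv_cancel_left (b s) (a s)
  have hc' : ∀ t ∈ s, mfderiv 𝓘(ℝ, ℝ) I c t = 0 := fun t ht =>
    (curveLogDeriv_mul_eq_iff (hb t ht) (hc t ht)).mp (hbc ▸ hab t ht)
  have hc₁ : c t₁ = 1 := by
    rw [← hs.apply_eq_of_mfderiv_eq_zero hc hc' ht₀ ht₁]
    exact inv_mul_eq_one.mpr h₀.symm
  exact (inv_mul_eq_one.mp hc₁).symm

theorem Convex.apply_eq_of_curveLogDeriv_eq_smul_comp {s : Set ℝ} (hs : Convex ℝ s)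
    {g f : ℝ → G} {φ : ℝ → ℝ} (hg : ∀ t ∈ s, MDifferentiableAt 𝓘(ℝ, ℝ) I g t)
    (hf : ∀ t ∈ s, MDifferentiableAt 𝓘(ℝ, ℝ) I f (φ t)) (hφ : ∀ t ∈ s, DifferentiableAt ℝ φ t)
    (hgf : ∀ t ∈ s, curveLogDeriv I g t = deriv φ t • curveLogDeriv I f (φ t))
    {x y : ℝ} (hx : x ∈ s) (hy : y ∈ s) : g y = f (φ y) * (f (φ x))⁻¹ * g x := by
  have hfφ : ∀ t ∈ s, MDifferentiableAt 𝓘(ℝ, ℝ) I (f ∘ φ) t := fun t ht =>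
    (hf t ht).comp t (mdifferentiableAt_iff_differentiableAt.mpr (hφ t ht))
  rw [mul_assoc]
  refine hs.apply_eq_of_curveLogDeriv_eq (b := fun t => (f ∘ φ) t * ((f (φ x))⁻¹ * g x))
    hg (fun t ht => mdifferentiableAt_mul_right.comp t (hfφ t ht)) (fun t ht => ?_) hx hy
    (mul_inv_cancel_left _ _).symm
  rw [curveLogDeriv_mul_const (hfφ t ht), curveLogDeriv_comp (hf t ht) (hφ t ht), hgf t ht]

end LieGroup

theorem development_concatenation_general
    {E : Type*} [NormedAddCommGroup E] [NormedSpace ℝ E]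
    {H : Type*} [TopologicalSpace H] (I : ModelWithCorners ℝ E H)
    {G : Type*} [TopologicalSpace G] [ChartedSpace H G] [Group G] [LieGroup I (⊤ : ℕ∞) G]
    (ξ₀ ξ₁ ξ : ℝ → TangentSpace I (1 : G))
    (hconcat₀ : ∀ t ∈ Set.Icc (0 : ℝ) (1 / 2), ξ t = (2 : ℝ) • ξ₀ (2 * t))
    (hconcat₁ : ∀ t ∈ Set.Icc (1 / 2 : ℝ) 1, ξ t = (2 : ℝ) • ξ₁ (2 * t - 1))
    (g₀ g₁ g : ℝ → G)
    (hg₀ : IsDevelopment I ξ₀ g₀) (hg₁ : IsDevelopment I ξ₁ g₁) (hg : IsDevelopment I ξ g) :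
    g 1 = g₁ 1 * g₀ 1 := by
  have hmd {f : ℝ → G} {η : ℝ → TangentSpace I (1 : G)} (hf : IsDevelopment I η f) (t : ℝ) :
      MDifferentiableAt 𝓘(ℝ, ℝ) I f t :=
    hf.1.mdifferentiableAt (by simp)
  have hhalf : g (1 / 2) = g₀ 1 := by
    have := (convex_Icc (0 : ℝ) (1 / 2)).apply_eq_of_curveLogDeriv_eq_smul_comp
      (φ := fun s => 2 * s) (fun t _ => hmd hg t) (fun t _ => hmd hg₀ _) (fun t _ => by fun_prop)
      (fun t ht => by simp [hg.2.2, hg₀.2.2, hconcat₀ t ht])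
      (left_mem_Icc.2 (by norm_num)) (right_mem_Icc.2 (by norm_num))
    simpa [hg.2.1, hg₀.2.1] using this
  have := (convex_Icc (1 / 2 : ℝ) 1).apply_eq_of_curveLogDeriv_eq_smul_comp
    (φ := fun s => 2 * s - 1) (fun t _ => hmd hg t) (fun t _ => hmd hg₁ _) (fun t _ => by fun_prop)
    (fun t ht => by simp [hg.2.2, hg₁.2.2, hconcat₁ t ht])
    (left_mem_Icc.2 (by norm_num)) (right_mem_Icc.2 (by norm_num))
  rwa [show (2 : ℝ) * 1 - 1 = 1 by norm_num, show (2 : ℝ) * (1 / 2) - 1 = 0 by norm_num,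
    hg₁.2.1, inv_one, mul_one, hhalf] at this

/-- Development takes concatenation of `𝔤`-paths to products:
`∫₀¹ (ξ₁ ⊙ ξ₀) = (∫₀¹ ξ₁) * (∫₀¹ ξ₀)`. -/
theorem development_concatenation
    {E : Type*} [NormedAddCommGroup E] [NormedSpace ℝ E]
    {H : Type*} [TopologicalSpace H] (I : ModelWithCorners ℝ E H)
    {G : Type*} [TopologicalSpace G] [ChartedSpace H G] [Group G] [LieGroup I (⊤ : ℕ∞) G]
    (ξ₀ ξ₁ ξ : ℝ → TangentSpace I (1 : G))
    (hξ₀ : ContMDiff 𝓘(ℝ, ℝ) 𝓘(ℝ, E) (⊤ : ℕ∞) (fun t => show E from ξ₀ t))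
    (hξ₁ : ContMDiff 𝓘(ℝ, ℝ) 𝓘(ℝ, E) (⊤ : ℕ∞) (fun t => show E from ξ₁ t))
    (hξ : ContMDiff 𝓘(ℝ, ℝ) 𝓘(ℝ, E) (⊤ : ℕ∞) (fun t => show E from ξ t))
    (hconcat₀ : ∀ t ∈ Set.Icc (0 : ℝ) (1 / 2), ξ t = (2 : ℝ) • ξ₀ (2 * t))
    (hconcat₁ : ∀ t ∈ Set.Icc (1 / 2 : ℝ) 1, ξ t = (2 : ℝ) • ξ₁ (2 * t - 1))
    (g₀ g₁ g : ℝ → G)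
    (hg₀ : IsDevelopment I ξ₀ g₀) (hg₁ : IsDevelopment I ξ₁ g₁) (hg : IsDevelopment I ξ g) :
    g 1 = g₁ 1 * g₀ 1 :=
  development_concatenation_general I ξ₀ ξ₁ ξ hconcat₀ hconcat₁ g₀ g₁ g hg₀ hg₁ hg
end
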